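/- For all x ≥ 0, log I₀(x) ≥ x²/4 − x⁴/64, i.e., I₀(x) ≥ exp(x²/4 − x⁴/64). -/
import Mathlib


/-- Modified Bessel function of the first kind of order zero. -/
noncomputable def besselI0 (x : ℝ) : ℝ := ∑' k : ℕ, (x / 2) ^ (2 * k) / (Nat.factorial k) ^ 2

lemma besselI0_summable (x : ℝ) :
    Summable (fun k : ℕ => (x / 2) ^ (2 * k) / (Nat.factorial k) ^ 2) := by
  have h := (Real.summable_pow_div_factorial ((x / 2) ^ 2)).abs
  apply Summable.of_nonneg_of_le (fun k => ?_) (fun k => ?_) h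
  · rw [pow_mul]; positivity
  · rw [pow_mul]
    have h1 : (0:ℝ) < (Nat.factorial k : ℝ) := by positivity
    have hf1 : (1:ℝ) ≤ (Nat.factorial k : ℝ) := by
      exact_mod_cast Nat.one_le_iff_ne_zero.mpr (Nat.factorial_ne_zero k)
    have h2 : (Nat.factorial k : ℝ) ≤ ((Nat.factorial k : ℝ)) ^ 2 := by nlinarith
    calc ((x / 2) ^ 2) ^ k / (Nat.factorial k : ℝ) ^ 2
        ≤ ((x / 2) ^ 2) ^ k / (Nat.factorial k : ℝ) := by
          apply div_le_div_of_nonneg_left (by positivity) h1 h2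
      _ ≤ |((x / 2) ^ 2) ^ k / (Nat.factorial k : ℝ)| := le_abs_self _

lemma besselI0_ge_partial (x : ℝ) :
    1 + (x/2)^2 + (x/2)^4 / 4 + (x/2)^6 / 36 + (x/2)^8 / 576 ≤ besselI0 x := by
  have h := Summable.sum_le_tsum (Finset.range 5)
    (fun k _ => by rw [pow_mul]; positivity : ∀ k ∉ Finset.range 5,
      (0:ℝ) ≤ (x / 2) ^ (2 * k) / (Nat.factorial k) ^ 2)
    (besselI0_summable x)
  rw [besselI0]
  refine le_trans (le_of_eq ?_) h
  simp [Finset.sum_range_succ, Nat.factorial]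
  ring

/-- For all `x ≥ 0`, `log I₀(x) ≥ x²/4 − x⁴/64`, i.e. `I₀(x) ≥ exp(x²/4 − x⁴/64)`. -/
theorem log_besselI0_ge (x : ℝ) (hx : 0 ≤ x) :
    x ^ 2 / 4 - x ^ 4 / 64 ≤ Real.log (besselI0 x) ∧
      Real.exp (x ^ 2 / 4 - x ^ 4 / 64) ≤ besselI0 x := by
  set t : ℝ := (x / 2) ^ 2 with ht
  have ht0 : 0 ≤ t := by positivity
  have hpart : 1 + t + t^2 / 4 + t^3 / 36 + t^4 / 576 ≤ besselI0 x := by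
    have := besselI0_ge_partial x
    have e2 : (x/2)^4 = t^2 := by rw [ht]; ring
    have e3 : (x/2)^6 = t^3 := by rw [ht]; ring
    have e4 : (x/2)^8 = t^4 := by rw [ht]; ring
    linarith [this]
  have hB1 : (1:ℝ) ≤ besselI0 x := by nlinarith
  have hφ : x ^ 2 / 4 - x ^ 4 / 64 = t - t^2 / 4 := by rw [ht]; ring
  have hexp : Real.exp (x ^ 2 / 4 - x ^ 4 / 64) ≤ besselI0 x := by
    rw [hφ]
    rcases le_or_gt t 4 with h4 | h4
    · -- 0 ≤ t ≤ 4, so 0 ≤ y ≤ 1 where y = t - t²/4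
      set y : ℝ := t - t^2 / 4 with hy
      have hy0 : 0 ≤ y := by rw [hy]; nlinarith
      have hy1 : y ≤ 1 := by rw [hy]; nlinarith [sq_nonneg (t - 2)]
      have hb := Real.exp_bound' hy0 hy1 (n := 4) (by norm_num)
      have hb2 : Real.exp y ≤ 1 + y + y^2/2 + y^3/6 + y^4 * 5 / 96 := by
        refine hb.trans (le_of_eq ?_)
        norm_num [Finset.sum_range_succ, Nat.factorial]
      refine hb2.trans (le_trans ?_ hpart)
      rw [hy]
      nlinarith [pow_nonneg ht0 3, pow_nonneg ht0 4, pow_nonneg ht0 5,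
        mul_nonneg (mul_nonneg ht0 ht0) ht0, sq_nonneg t, sq_nonneg (t - 2),
        mul_nonneg (pow_nonneg ht0 3) (sub_nonneg.mpr h4),
        mul_nonneg (pow_nonneg ht0 4) (sub_nonneg.mpr h4),
        mul_nonneg (pow_nonneg ht0 5) (sub_nonneg.mpr h4),
        mul_nonneg (pow_nonneg ht0 6) (sub_nonneg.mpr h4),
        mul_nonneg (mul_nonneg (pow_nonneg ht0 3) (sub_nonneg.mpr h4)) (sub_nonneg.mpr h4),
        mul_nonneg (mul_nonneg (pow_nonneg ht0 4) (sub_nonneg.mpr h4)) (sub_nonneg.mpr h4)]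
    · -- t > 4, so t - t²/4 ≤ 0
      have : t - t^2 / 4 ≤ 0 := by nlinarith
      calc Real.exp (t - t^2/4) ≤ Real.exp 0 := Real.exp_le_exp.mpr this
        _ = 1 := Real.exp_zero
        _ ≤ besselI0 x := hB1
  refine ⟨?_, hexp⟩
  have hBpos : 0 < besselI0 x := lt_of_lt_of_le one_pos hB1
  rw [Real.le_log_iff_exp_le hBpos]
  exact hexp
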